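/- arXiv:2601.16857 — 2 statements merged into one kernel-verified Lean document; each statement's English description precedes it below -/
import Mathlib

section
/- Sequential recursion identity: let P be a row-stochastic matrix on finite X and define, for a fixed trajectory of erasures, the conditional laws p_i(x_i | x_0) satisfying the recursion p_{i+1}(x_{i+1}|x_0) = (1/(1−s_i)) ∑_{x_i} P(x_i, x_{i+1}) (p_i(x_i|x_0) − min_u p_i(x_i|u)), where s_i = ∑_{x_i} min_u p_i(x_i|u), with p_1(x_1|x_0) = P(x_0,x_1). Then for all i ≥ 1, p_i(x_i|x_0) = (∏_{k=1}^{i−1} 1/(1−s_k)) · (P^i(x_0,x_i) − ∑_{x_{i−1}} P(x_{i−1},x_i) min_u P^{i−1}(u,x_{i−1})), provided s_k < 1 for all k < i. -/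
/-!
Induction on `i`. Erasing the column minima, `f(x₀, x) ↦ f(x₀, x) - min_u f(u, x)`, commutes with
nonnegative scaling and ignores any shift that depends on the column `x` only. By induction
`p_i = C_i (P^i - m_i)` with `C_i ≥ 0` and `m_i` independent of `x₀`, so the erasure of `p_i` is
`C_i` times that of `P^i`, and one more multiplication by `P` gives the closed form at `i + 1`.
At `i = 1` the correction term vanishes because, once `|X| ≥ 2`, every column of the identity
matrix has a zero entry.
-/

open Finset

section Erasure

variable {ι R : Type*} [CommRing R] [LinearOrder R] [IsOrderedRing R]

lemma Finset.inf'_mul_add {s : Finset ι} (hs : s.Nonempty) {c : R} (hc : 0 ≤ c) (d : R)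
    (g : ι → R) : s.inf' hs (fun u => c * g u + d) = c * s.inf' hs g + d := by
  have hmono : Monotone (fun t => c * t + d) := fun _ _ hab =>
    add_le_add_left (mul_le_mul_of_nonneg_left hab hc) d
  exact (apply_inf'_eq_inf'_comp hs (fun t => c * t + d) fun _ _ => hmono.map_min).symm

lemma Finset.sub_inf'_of_eq_mul_add {s : Finset ι} (hs : s.Nonempty) {c : R} (hc : 0 ≤ c)
    (d : R) {f g : ι → R} (hfg : ∀ u, f u = c * g u + d) (v : ι) :
    f v - s.inf' hs f = c * (g v - s.inf' hs g) := by
  rw [show f = fun u => c * g u + d from funext hfg, inf'_mul_add hs hc]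
  ring

lemma inf'_ite_eq_zero [Fintype ι] [DecidableEq ι] [Nonempty ι] (hcard : 2 ≤ Fintype.card ι)
    (x : ι) : univ.inf' univ_nonempty (fun u => if u = x then (1 : R) else 0) = 0 := by
  obtain ⟨u, hu⟩ := Fintype.exists_ne_of_one_lt_card hcard x
  refine le_antisymm ?_ (le_inf' _ _ fun v _ => by split_ifs <;> simp)
  exact (inf'_le _ (mem_univ u)).trans (by simp [hu])

lemma sum_mul_sub_inf'_of_eq_mul_sub [Fintype ι] [Nonempty ι] (P f g : ι → ι → R)
    {c : R} (hc : 0 ≤ c) {m : ι → R} (hfg : ∀ u x, f u x = c * (g u x - m x)) (x₀ y : ι) :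
    ∑ x, P x y * (f x₀ x - univ.inf' univ_nonempty (fun u => f u x))
      = c * (∑ x, g x₀ x * P x y
        - ∑ x, P x y * univ.inf' univ_nonempty (fun u => g u x)) := by
  have hterm : ∀ x, f x₀ x - univ.inf' univ_nonempty (fun u => f u x)
      = c * (g x₀ x - univ.inf' univ_nonempty (fun u => g u x)) := fun x =>
    sub_inf'_of_eq_mul_add (f := fun u => f u x) (g := fun u => g u x) _ hc (-(c * m x))
      (fun u => by rw [hfg]; ring) x₀
  simp only [hterm, mul_sum, ← sum_sub_distrib]
  exact sum_congr rfl fun x _ => by ring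

end Erasure

theorem stmt_14_general {X : Type*} [Fintype X] [DecidableEq X] [Nonempty X]
    (hcard : 2 ≤ Fintype.card X)
    (P : X → X → ℝ) (Pt : ℕ → X → X → ℝ)
    (hPt0 : ∀ x y, Pt 0 x y = if x = y then 1 else 0)
    (hPtsucc : ∀ t x y, Pt (t + 1) x y = ∑ z, Pt t x z * P z y)
    (pf : ℕ → X → X → ℝ) (s : ℕ → ℝ)
    (hinit : ∀ x0 x1, pf 1 x0 x1 = P x0 x1)
    (hrec : ∀ i : ℕ, 1 ≤ i → ∀ (x0 x' : X),
      pf (i + 1) x0 x'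
        = (1 - s i)⁻¹ *
          ∑ x, P x x' * (pf i x0 x - Finset.univ.inf' Finset.univ_nonempty (fun u => pf i u x))) :
    ∀ i : ℕ, 1 ≤ i → (∀ k, 1 ≤ k → k < i → s k < 1) → ∀ (x0 xi : X),
      pf i x0 xi
        = (∏ k ∈ Finset.Icc 1 (i - 1), (1 - s k)⁻¹) *
          (Pt i x0 xi
            - ∑ x', P x' xi * Finset.univ.inf' Finset.univ_nonempty (fun u => Pt (i - 1) u x')) := by
  have hmin₀ : ∀ x, univ.inf' univ_nonempty (fun u => Pt 0 u x) = 0 := fun x => by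
    simpa only [hPt0] using inf'_ite_eq_zero hcard x
  refine Nat.le_induction (fun _ x₀ x₁ => ?_) (fun i hi ih hs x₀ y => ?_)
  · simp only [Nat.sub_self, hmin₀]
    simp [hinit, hPtsucc, hPt0]
  obtain ⟨n, rfl⟩ : ∃ n, i = n + 1 := ⟨i - 1, by omega⟩
  have hC : 0 ≤ ∏ k ∈ Icc 1 n, (1 - s k)⁻¹ := prod_nonneg fun k hk =>
    inv_nonneg.2 (sub_nonneg.2 (hs k (mem_Icc.1 hk).1 (by grind)).le)
  rw [hrec _ hi, sum_mul_sub_inf'_of_eq_mul_sub P _ _ hC (ih fun k hk hkn => hs k hk (by omega)),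
    Nat.add_sub_cancel, prod_Icc_succ_top (by omega), hPtsucc (n + 1) x₀ y]
  ring

/-- closed form for the SMR sequential recursion:
`p_i(x_i|x_0) = (∏_{k=1}^{i−1} 1/(1−s_k)) (P^i(x_0,x_i) − ∑_{x'} P(x',x_i) min_u P^{i−1}(u,x'))`. -/
theorem stmt_14 {X : Type*} [Fintype X] [DecidableEq X] [Nonempty X]
    (hcard : 2 ≤ Fintype.card X)
    (P : X → X → ℝ) (Pt : ℕ → X → X → ℝ)
    (hnonneg : ∀ x y, 0 ≤ P x y)
    (hrow : ∀ x, ∑ y, P x y = 1)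
    (hPt0 : ∀ x y, Pt 0 x y = if x = y then 1 else 0)
    (hPtsucc : ∀ t x y, Pt (t + 1) x y = ∑ z, Pt t x z * P z y)
    (pf : ℕ → X → X → ℝ) (s : ℕ → ℝ)
    (hs : ∀ i, s i = ∑ x, Finset.univ.inf' Finset.univ_nonempty (fun u => pf i u x))
    (hinit : ∀ x0 x1, pf 1 x0 x1 = P x0 x1)
    (hrec : ∀ i : ℕ, 1 ≤ i → ∀ (x0 x' : X),
      pf (i + 1) x0 x'
        = (1 - s i)⁻¹ *
          ∑ x, P x x' * (pf i x0 x - Finset.univ.inf' Finset.univ_nonempty (fun u => pf i u x))) :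
    ∀ i : ℕ, 1 ≤ i → (∀ k, 1 ≤ k → k < i → s k < 1) → ∀ (x0 xi : X),
      pf i x0 xi
        = (∏ k ∈ Finset.Icc 1 (i - 1), (1 - s k)⁻¹) *
          (Pt i x0 xi
            - ∑ x', P x' xi * Finset.univ.inf' Finset.univ_nonempty (fun u => Pt (i - 1) u x')) :=
  stmt_14_general hcard P Pt hPt0 hPtsucc pf s hinit hrec
end

section
/- With p_i and s_i as in the sequential recursion, and α_t := ∑_x min_u P^t(u,x), one has s_i = (∏_{k=1}^{i−1} 1/(1−s_k)) · (α_i − α_{i−1}); combined with the telescoping product ∏_{k=1}^{i−1}(1−s_k) = 1 − α_{i−1}, this yields s_i = (α_i − α_{i−1})/(1 − α_{i−1}) for all i ≥ 1 with α_{i−1} < 1. -/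
/-- inf' commutes with the increasing affine map `t ↦ (t - c)/d` for `d > 0`. -/
lemma inf'_affine_div {X : Type*} [Fintype X] [Nonempty X] (f : X → ℝ) (c d : ℝ)
    (hd : 0 < d) :
    Finset.univ.inf' Finset.univ_nonempty (fun u => (f u - c) / d)
      = (Finset.univ.inf' Finset.univ_nonempty f - c) / d := by
  apply le_antisymm
  · obtain ⟨u, _, hu⟩ := Finset.exists_mem_eq_inf' (Finset.univ_nonempty (α := X)) f
    calc Finset.univ.inf' Finset.univ_nonempty (fun u => (f u - c) / d)
        ≤ (f u - c) / d := Finset.inf'_le _ (Finset.mem_univ u)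
      _ = _ := by rw [hu]
  · apply Finset.le_inf'
    intro u _
    have : Finset.univ.inf' Finset.univ_nonempty f ≤ f u :=
      Finset.inf'_le _ (Finset.mem_univ u)
    gcongr

/-- with `α_t = ∑_x min_u P^t(u,x)`, the SMR recursion satisfies
`s_i = (α_i − α_{i−1})/(1 − α_{i−1})`. -/
theorem stmt_15 {X : Type*} [Fintype X] [DecidableEq X] [Nonempty X]
    (hcard : 2 ≤ Fintype.card X)
    (P : X → X → ℝ) (Pt : ℕ → X → X → ℝ)
    (hnonneg : ∀ x y, 0 ≤ P x y)
    (hrow : ∀ x, ∑ y, P x y = 1)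
    (hPt0 : ∀ x y, Pt 0 x y = if x = y then 1 else 0)
    (hPtsucc : ∀ t x y, Pt (t + 1) x y = ∑ z, Pt t x z * P z y)
    (pf : ℕ → X → X → ℝ) (s : ℕ → ℝ)
    (hs : ∀ i, s i = ∑ x, Finset.univ.inf' Finset.univ_nonempty (fun u => pf i u x))
    (hinit : ∀ x0 x1, pf 1 x0 x1 = P x0 x1)
    (hrec : ∀ i : ℕ, 1 ≤ i → ∀ (x0 x' : X),
      pf (i + 1) x0 x'
        = (1 - s i)⁻¹ *
          ∑ x, P x x' * (pf i x0 x - Finset.univ.inf' Finset.univ_nonempty (fun u => pf i u x)))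
    (α : ℕ → ℝ)
    (hα : ∀ t, α t = ∑ x, Finset.univ.inf' Finset.univ_nonempty (fun u => Pt t u x))
    (hαlt : ∀ t, α t < 1) :
    ∀ i : ℕ, 1 ≤ i → s i = (α i - α (i - 1)) / (1 - α (i - 1)) := by
  -- notation: m t x = min_u Pt t u x ; q t x' = ∑_x P x x' * m t x
  set m : ℕ → X → ℝ := fun t x => Finset.univ.inf' Finset.univ_nonempty (fun u => Pt t u x)
    with hm
  set q : ℕ → X → ℝ := fun t x' => ∑ x, P x x' * m t x with hq
  have hαpos : ∀ t, 0 < 1 - α t := fun t => by linarith [hαlt t]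
  have hm0 : ∀ x, m 0 x = 0 := by
    intro x
    obtain ⟨u, hu⟩ := Fintype.exists_ne_of_one_lt_card (by omega) x
    rw [hm]
    apply le_antisymm
    · calc Finset.univ.inf' Finset.univ_nonempty (fun v : X => Pt 0 v x)
          ≤ Pt 0 u x := Finset.inf'_le _ (Finset.mem_univ u)
        _ ≤ 0 := by rw [hPt0]; simp [hu]
    · exact Finset.le_inf' _ _ fun v _ => by rw [hPt0]; split <;> norm_num
  have hα0 : α 0 = 0 := by
    rw [hα]; simpa using Finset.sum_congr rfl (fun x _ => hm0 x)
  have hqsum : ∀ t, ∑ x', q t x' = α t := by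
    intro t
    rw [hq, hα]
    rw [Finset.sum_comm]
    refine Finset.sum_congr rfl (fun x _ => ?_)
    rw [← Finset.sum_mul, hrow, one_mul]
  -- main closed form
  have key : ∀ i, 1 ≤ i → ∀ x0 x,
      pf i x0 x = (Pt i x0 x - q (i - 1) x) / (1 - α (i - 1)) := by
    intro i hi
    induction i, hi using Nat.le_induction with
    | base =>
      intro x0 x
      have hq0 : q 0 x = 0 := by
        rw [hq]
        simp only
        refine Finset.sum_eq_zero (fun z _ => ?_)
        rw [hm0]; ring
      have hPt1 : Pt 1 x0 x = P x0 x := by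
        rw [hPtsucc 0 x0 x]
        rw [Finset.sum_congr rfl (fun z _ => by rw [hPt0])]
        simp
      simp [hinit, hPt1, hq0, hα0]
    | succ i hi ih =>
      -- inf' of pf i
      have hinfpf : ∀ x, Finset.univ.inf' Finset.univ_nonempty (fun u => pf i u x)
          = (m i x - q (i - 1) x) / (1 - α (i - 1)) := by
        intro x
        have : (fun u => pf i u x) = fun u => ((fun u => Pt i u x) u - q (i - 1) x) / (1 - α (i - 1)) := by
          funext u; exact ih u x
        rw [this, inf'_affine_div _ _ _ (hαpos _)]
      -- s i formula
      have hsf : s i = (α i - α (i - 1)) / (1 - α (i - 1)) := by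
        rw [hs i]
        rw [Finset.sum_congr rfl (fun x _ => hinfpf x)]
        rw [← Finset.sum_div, Finset.sum_sub_distrib, hqsum, ← hα]
      have h2 : (1 - α (i - 1)) ≠ 0 := ne_of_gt (hαpos _)
      have h1s : 1 - s i = (1 - α i) / (1 - α (i - 1)) := by
        rw [hsf, eq_div_iff h2, sub_mul, div_mul_cancel₀ _ h2]
        ring
      intro x0 x'
      rw [hrec i hi]
      have hsum : ∑ x, P x x' * (pf i x0 x -
            Finset.univ.inf' Finset.univ_nonempty (fun u => pf i u x))
          = (Pt (i + 1) x0 x' - q i x') / (1 - α (i - 1)) := by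
        have step : ∀ x, P x x' * (pf i x0 x -
              Finset.univ.inf' Finset.univ_nonempty (fun u => pf i u x))
            = (P x x' * Pt i x0 x - P x x' * m i x) / (1 - α (i - 1)) := by
          intro x
          rw [hinfpf x, ih x0 x, div_sub_div_same, ← mul_div_assoc]
          congr 1
          ring
        rw [Finset.sum_congr rfl (fun x _ => step x), ← Finset.sum_div,
          Finset.sum_sub_distrib]
        congr 1
        congr 1
        · rw [hPtsucc]
          exact Finset.sum_congr rfl (fun z _ => mul_comm _ _)
      rw [hsum, h1s]
      have h1 : (1 - α i) ≠ 0 := ne_of_gt (hαpos i)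
      simp only [Nat.add_sub_cancel]
      field_simp
  intro i hi
  have hinfpf : ∀ x, Finset.univ.inf' Finset.univ_nonempty (fun u => pf i u x)
      = (m i x - q (i - 1) x) / (1 - α (i - 1)) := by
    intro x
    have : (fun u => pf i u x) = fun u => ((fun u => Pt i u x) u - q (i - 1) x) / (1 - α (i - 1)) := by
      funext u; exact key i hi u x
    rw [this, inf'_affine_div _ _ _ (hαpos _)]
  rw [hs i, Finset.sum_congr rfl (fun x _ => hinfpf x), ← Finset.sum_div,
    Finset.sum_sub_distrib, hqsum, ← hα]
end
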